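/- arXiv:2410.23228 — 2 statements merged into one kernel-verified Lean document; each statement's English description precedes it below -/
import Mathlib

section
/- Let μ₀ be a Borel probability measure on ℝ and (μ₀^N)_{N∈ℕ} a sequence of Borel probability measures on ℝ with W₁(μ₀^N, μ₀) → 0 as N → ∞. Suppose T and, for each N, T^N are maps [0,∞) × ℝ → ℝ such that: T(0,x) = x and T^N(0,x) = x for all x; for each t ≥ 0 the maps T(t,·), T^N(t,·) are Borel measurable and satisfy T(t,x+2π) = T(t,x)+2π and T^N(t,x+2π) = T^N(t,x)+2π; and for every x ∈ ℝ, t ↦ T(t,x) and t ↦ T^N(t,x) are differentiable with ∂ₜT(t,x) = ∫ h_β′(T(t,x) − T(t,y)) dμ₀(y) and ∂ₜT^N(t,x) = ∫ h_β′(T^N(t,x) − T^N(t,y)) dμ₀^N(y). Then for every fixed t ≥ 0, W₁(T^N(t,·)₊μ₀^N, T(t,·)₊μ₀) → 0 as N → ∞. (Mean-field limit: convergence of the empirical dynamics to the mean-field dynamics at every fixed time.) -/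
open MeasureTheory Real Filter

/-- The interaction kernel `h_β(θ) = β⁻¹ exp(β cos θ)`. -/
noncomputable def hBeta (β : ℝ) : ℝ → ℝ := fun θ => β⁻¹ * Real.exp (β * Real.cos θ)

/-- Its derivative `h_β′`. -/
noncomputable def hBeta' (β : ℝ) : ℝ → ℝ := deriv (hBeta β)

/-- Periodic Kantorovich–Rubinstein distance: sup over 2π-periodic 1-Lipschitz test functions. -/
noncomputable def W1 (μ ν : Measure ℝ) : ℝ :=
  ⨆ f : {f : ℝ → ℝ // Function.Periodic f (2 * π) ∧ LipschitzWith 1 f},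
    (∫ x, f.1 x ∂μ) - ∫ x, f.1 x ∂ν

/-!
Dobrushin-type stability. Let `T`, `S` be the flows driven by `μ₀` and `μ₀^N`, `k = h_β′` (smooth
and periodic, hence Lipschitz) and `u = S - T`. The difference of the drifts at `x` splits into
`∫ k(S x - S z) - k(T x - T z) dμ₀^N(z)`, bounded by `2 Lip(k) sup |u|`, and
`∫ k(T x - T z) d(μ₀^N - μ₀)(z)`, bounded by `Lip(k) Lip(T(s,·)) W₁(μ₀^N, μ₀)`: the integrand is a
periodic test function because `T` commutes with the shift by `2π`, and `Lip(T(s,·)) ≤ exp(Lip(k) s)`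
by Grönwall. Since `sup |u|` appears on the right, it is controlled by a bootstrap on time windows
short enough to absorb it, giving `sup |u(t,·)| ≤ C W₁(μ₀^N, μ₀)`; finally
`W₁(S_t μ₀^N, T_t μ₀) ≤ sup |u(t,·)| + Lip(T(t,·)) W₁(μ₀^N, μ₀)`.
-/

open Function Set
open scoped NNReal

namespace Function.Periodic

variable {f : ℝ → ℝ} {c : ℝ}

protected theorem deriv (hf : Periodic f c) : Periodic (deriv f) c := fun x => by
  rw [← deriv_comp_add_const, funext hf]

theorem exists_lipschitzWith (hf : Periodic f c) (hc : c ≠ 0) (hf' : ContDiff ℝ 1 f) :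
    ∃ K, LipschitzWith K f := by
  have hcont := hf'.continuous_deriv le_rfl
  obtain ⟨C, hC⟩ := isBounded_iff_forall_norm_le.1
    (hf.deriv.compact_of_continuous hc hcont).isBounded
  refine ⟨C.toNNReal,
    lipschitzWith_of_nnnorm_deriv_le (hf'.differentiable one_ne_zero) fun x => ?_⟩
  rw [← NNReal.coe_le_coe, coe_nnnorm]
  exact (hC _ (mem_range_self x)).trans (le_coe_toNNReal C)

theorem abs_sub_le_of_lipschitzWith {K : ℝ≥0} (hf : Periodic f c) (hc : 0 < c)
    (hK : LipschitzWith K f) (x y : ℝ) : |f x - f y| ≤ K * c := by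
  have hx : f x = f (toIcoMod hc y x) := by
    rw [← hf.sub_zsmul_eq (toIcoDiv hc y x), ← self_sub_toIcoMod, sub_sub_cancel]
  obtain ⟨h₁, h₂⟩ := toIcoMod_mem_Ico hc y x
  rw [hx, ← Real.dist_eq]
  refine (hK.dist_le_mul _ _).trans (mul_le_mul_of_nonneg_left ?_ K.2)
  rw [Real.dist_eq, abs_of_nonneg (sub_nonneg.2 h₁)]
  linarith

theorem integrable_comp {K : ℝ≥0} {α : Type*} [MeasurableSpace α] {μ : Measure α}
    [IsFiniteMeasure μ] (hf : Periodic f c) (hc : 0 < c) (hK : LipschitzWith K f) {g : α → ℝ}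
    (hg : Measurable g) : Integrable (fun x => f (g x)) μ := by
  refine .of_bound (hK.continuous.measurable.comp hg).aestronglyMeasurable (|f 0| + K * c)
    (ae_of_all _ fun x => ?_)
  have := hf.abs_sub_le_of_lipschitzWith hc hK (g x) 0
  rw [Real.norm_eq_abs]
  linarith [abs_sub_abs_le_abs_sub (f (g x)) (f 0)]

theorem integrable {K : ℝ≥0} {μ : Measure ℝ} [IsFiniteMeasure μ] (hf : Periodic f c)
    (hc : 0 < c) (hK : LipschitzWith K f) : Integrable f μ :=
  hf.integrable_comp hc hK measurable_id

end Function.Periodic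

section ProbabilityIntegral

variable {α : Type*} [MeasurableSpace α] {μ ν : Measure α} [IsProbabilityMeasure μ]
  {F G : α → ℝ} {B : ℝ}

theorem abs_integral_sub_le (hF : Integrable F μ) {c : ℝ} (h : ∀ x, |F x - c| ≤ B) :
    |∫ x, F x ∂μ - c| ≤ B := by
  have := norm_integral_le_of_norm_le_const (μ := μ) (f := fun x => F x - c) (ae_of_all _ h)
  rwa [integral_sub hF (integrable_const c), integral_const, probReal_univ, one_smul,
    Real.norm_eq_abs, mul_one] at this

theorem abs_integral_sub_integral_le_of_abs_sub_le (hF : Integrable F μ) (hG : Integrable G μ)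
    (h : ∀ x, |F x - G x| ≤ B) : |∫ x, F x ∂μ - ∫ x, G x ∂μ| ≤ B := by
  have := norm_integral_le_of_norm_le_const (μ := μ) (f := fun x => F x - G x) (ae_of_all _ h)
  rwa [integral_sub hF hG, probReal_univ, Real.norm_eq_abs, mul_one] at this

theorem abs_integral_sub_integral_le [IsProbabilityMeasure ν] (hF : Integrable F μ)
    (hG : Integrable G ν) (h : ∀ x y, |F x - G y| ≤ B) :
    |∫ x, F x ∂μ - ∫ y, G y ∂ν| ≤ B := by
  rw [abs_sub_comm]
  refine abs_integral_sub_le hG fun y => ?_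
  rw [abs_sub_comm]
  exact abs_integral_sub_le hF fun x => h x y

end ProbabilityIntegral

section W1

variable {μ ν : Measure ℝ}

theorem W1_nonneg : 0 ≤ W1 μ ν := by
  by_cases h : BddAbove <| range
      fun f : {f : ℝ → ℝ // Periodic f (2 * π) ∧ LipschitzWith 1 f} => ∫ x, f.1 x ∂μ - ∫ x, f.1 x ∂ν
  · unfold W1
    simpa using le_ciSup h ⟨0, fun _ => rfl, (LipschitzWith.const 0).weaken zero_le_one⟩
  · -- junk value of an unbounded `⨆`
    exact (Real.iSup_of_not_bddAbove h).ge

theorem W1_le {a : ℝ} (ha : 0 ≤ a)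
    (h : ∀ f, Periodic f (2 * π) → LipschitzWith 1 f → ∫ x, f x ∂μ - ∫ x, f x ∂ν ≤ a) :
    W1 μ ν ≤ a :=
  Real.iSup_le (fun f => h f.1 f.2.1 f.2.2) ha

variable [IsProbabilityMeasure μ] [IsProbabilityMeasure ν] {f : ℝ → ℝ}

theorem integral_sub_integral_le_W1 (hf : Periodic f (2 * π)) (hf₁ : LipschitzWith 1 f) :
    ∫ x, f x ∂μ - ∫ x, f x ∂ν ≤ W1 μ ν := by
  refine le_ciSup (f := fun g : {g : ℝ → ℝ // Periodic g (2 * π) ∧ LipschitzWith 1 g} =>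
    ∫ x, g.1 x ∂μ - ∫ x, g.1 x ∂ν) ⟨2 * π, ?_⟩ ⟨f, hf, hf₁⟩
  rintro _ ⟨⟨g, hg, hg₁⟩, rfl⟩
  refine (le_abs_self _).trans <| abs_integral_sub_integral_le
    (hg.integrable (μ := μ) two_pi_pos hg₁) (hg.integrable (μ := ν) two_pi_pos hg₁) fun x y => ?_
  simpa using hg.abs_sub_le_of_lipschitzWith two_pi_pos hg₁ x y

theorem integral_sub_integral_le_mul_W1 {L : ℝ≥0} (hf : Periodic f (2 * π))
    (hL : LipschitzWith L f) : ∫ x, f x ∂μ - ∫ x, f x ∂ν ≤ L * W1 μ ν := by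
  rcases eq_or_ne L 0 with rfl | hL₀
  · have hconst : ∀ x, f x = f 0 := fun x => by simpa using hL.dist_le_mul x 0
    have := abs_integral_sub_integral_le (B := 0) (hf.integrable (μ := μ) two_pi_pos hL)
      (hf.integrable (μ := ν) two_pi_pos hL) fun x y => by
        rw [hconst x, hconst y, sub_self, abs_zero]
    simpa using (le_abs_self _).trans this
  have hL₀' : (0 : ℝ) < L := by positivity
  have h₁ : LipschitzWith 1 fun x => (L : ℝ)⁻¹ * f x := .of_dist_le_mul fun x y => by
    rw [Real.dist_eq, ← mul_sub, abs_mul, abs_of_pos (inv_pos.2 hL₀'), NNReal.coe_one, one_mul,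
      inv_mul_le_iff₀ hL₀', ← Real.dist_eq]
    exact hL.dist_le_mul x y
  have hper : Periodic (fun x => (L : ℝ)⁻¹ * f x) (2 * π) := fun x => by
    simp only [hf x]
  have := integral_sub_integral_le_W1 (μ := μ) (ν := ν) hper h₁
  rwa [integral_const_mul, integral_const_mul, ← mul_sub, inv_mul_le_iff₀ hL₀'] at this

theorem abs_integral_sub_integral_le_mul_W1 {L : ℝ≥0} (hf : Periodic f (2 * π))
    (hL : LipschitzWith L f) : |∫ x, f x ∂μ - ∫ x, f x ∂ν| ≤ L * W1 μ ν := by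
  refine abs_le.2 ⟨?_, integral_sub_integral_le_mul_W1 hf hL⟩
  have := integral_sub_integral_le_mul_W1 (μ := μ) (ν := ν) (f := -f)
    (fun x => by simp only [Pi.neg_apply, hf x]) (lipschitzWith_neg_iff.2 hL)
  simp only [Pi.neg_apply, integral_neg] at this
  linarith

theorem W1_map_le {S T : ℝ → ℝ} (hS : Measurable S) (hT : Measurable T)
    (hTper : ∀ x, T (x + 2 * π) = T x + 2 * π) {L : ℝ≥0} (hTL : LipschitzWith L T) {δ : ℝ}
    (hST : ∀ x, |S x - T x| ≤ δ) : W1 (ν.map S) (μ.map T) ≤ δ + L * W1 ν μ := by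
  refine W1_le (add_nonneg ((abs_nonneg _).trans (hST 0)) (mul_nonneg L.2 W1_nonneg))
    fun f hf hf₁ => ?_
  have hfc := hf₁.continuous
  rw [integral_map hS.aemeasurable hfc.aestronglyMeasurable,
    integral_map hT.aemeasurable hfc.aestronglyMeasurable]
  have hfT : Periodic (fun x => f (T x)) (2 * π) := fun x => by
    simp only [hTper, hf (T x)]
  have hfS := hf.integrable_comp (μ := ν) two_pi_pos hf₁ hS
  have hfTν := hf.integrable_comp (μ := ν) two_pi_pos hf₁ hT
  have h₁ := abs_integral_sub_integral_le_of_abs_sub_le hfS hfTν fun x => by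
    have := hf₁.dist_le_mul (S x) (T x)
    rw [NNReal.coe_one, one_mul, Real.dist_eq, Real.dist_eq] at this
    exact this.trans (hST x)
  have h₂ := integral_sub_integral_le_mul_W1 (μ := ν) (ν := μ) hfT
    (by simpa [Function.comp_def] using hf₁.comp hTL)
  calc ∫ x, f (S x) ∂ν - ∫ x, f (T x) ∂μ
      = (∫ x, f (S x) ∂ν - ∫ x, f (T x) ∂ν) + (∫ x, f (T x) ∂ν - ∫ x, f (T x) ∂μ) := by
        ring
    _ ≤ δ + L * W1 ν μ := add_le_add ((le_abs_self _).trans h₁) h₂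

end W1

section Bootstrap

variable {ι : Type*} {u u' : ℝ → ι → ℝ} {K ε : ℝ}

theorem abs_le_of_bootstrap_window {a b B D : ℝ} (hab : a ≤ b) (hK : 0 ≤ K) (hε : 0 ≤ ε)
    (hKab : K * (b - a) ≤ 1 / 2)
    (hu : ∀ x, ∀ s ∈ Icc a b, HasDerivWithinAt (u · x) (u' s x) (Icc a b) s)
    (hB : ∀ s ∈ Icc a b, ∀ x, |u s x| ≤ B)
    (hu' : ∀ s ∈ Icc a b, ∀ Θ, (∀ x, |u s x| ≤ Θ) → ∀ x, |u' s x| ≤ K * Θ + ε)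
    (hD : ∀ x, |u a x| ≤ D) :
    ∀ s ∈ Icc a b, ∀ x, |u s x| ≤ 2 * (D + (b - a) * ε) := by
  rcases isEmpty_or_nonempty ι with hι | hι
  · exact fun _ _ x => isEmptyElim x
  have : Nonempty (Icc a b × ι) := ⟨⟨⟨a, le_rfl, hab⟩, hι.some⟩⟩
  set Θ := ⨆ p : Icc a b × ι, |u p.1 p.2|
  have hΘ : ∀ s ∈ Icc a b, ∀ x, |u s x| ≤ Θ := fun s hs x =>
    le_ciSup (f := fun p : Icc a b × ι => |u p.1 p.2|)
      ⟨B, by rintro _ ⟨p, rfl⟩; exact hB p.1 p.1.2 p.2⟩ ⟨⟨s, hs⟩, x⟩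
  have hΘ₀ : 0 ≤ Θ := (abs_nonneg _).trans (hΘ a ⟨le_rfl, hab⟩ hι.some)
  have hstep : ∀ s ∈ Icc a b, ∀ x, |u s x| ≤ D + Θ / 2 + (b - a) * ε := by
    intro s hs x
    have hmv := norm_image_sub_le_of_norm_deriv_le_segment' (hu x)
      (fun r hr => hu' r (Ico_subset_Icc_self hr) Θ (hΘ r (Ico_subset_Icc_self hr)) x) s hs
    have h₁ : K * Θ * (s - a) ≤ Θ / 2 := by
      have : K * (s - a) ≤ 1 / 2 := hKab.trans' (by gcongr; exact hs.2)
      nlinarith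
    have h₂ : ε * (s - a) ≤ (b - a) * ε := by nlinarith [hs.2]
    rw [Real.norm_eq_abs] at hmv
    linarith [abs_sub_abs_le_abs_sub (u s x) (u a x), hD x]
  -- the window is short enough for the self-referential term `Θ / 2` to be absorbed
  have hΘle : Θ ≤ D + Θ / 2 + (b - a) * ε := ciSup_le fun p => hstep p.1 p.1.2 p.2
  intro s hs x
  linarith [hΘ s hs x]

theorem abs_le_of_bootstrap {t τ M : ℝ} (hK : 0 ≤ K) (hε : 0 ≤ ε) (hτ : 0 ≤ τ)
    (hKτ : K * τ ≤ 1 / 2)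
    (hu : ∀ x, ∀ s ∈ Icc 0 t, HasDerivWithinAt (u · x) (u' s x) (Icc 0 t) s)
    (hu₀ : ∀ x, u 0 x = 0) (hM : ∀ s ∈ Icc 0 t, ∀ x, |u' s x| ≤ M)
    (hu' : ∀ s ∈ Icc 0 t, ∀ Θ, (∀ x, |u s x| ≤ Θ) → ∀ x, |u' s x| ≤ K * Θ + ε) (n : ℕ) :
    ∀ s ∈ Icc 0 t, s ≤ n * τ → ∀ x, |u s x| ≤ (2 ^ n - 1) * (2 * τ * ε) := by
  have hB : ∀ s ∈ Icc 0 t, ∀ x, |u s x| ≤ |M| * t := fun s hs x => by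
    have := norm_image_sub_le_of_norm_deriv_le_segment' (hu x)
      (fun r hr => (hM r (Ico_subset_Icc_self hr) x).trans (le_abs_self M)) s hs
    rw [hu₀, sub_zero, sub_zero, Real.norm_eq_abs] at this
    exact this.trans (mul_le_mul_of_nonneg_left hs.2 (abs_nonneg M))
  induction n with
  | zero =>
    intro s hs hs₀ x
    rw [le_antisymm (by simpa using hs₀) hs.1, hu₀]
    simp
  | succ n ih =>
    intro s hs hsn x
    have hτε : 0 ≤ 2 * τ * ε := by positivity
    rcases le_or_gt s (n * τ) with hsn' | hsn'
    · refine (ih s hs hsn' x).trans (mul_le_mul_of_nonneg_right ?_ hτε)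
      gcongr
      · norm_num
      · omega
    have ha : 0 ≤ n * τ := by positivity
    have hwin : Icc (n * τ) s ⊆ Icc 0 t := Icc_subset_Icc ha hs.2
    have hsτ : s - n * τ ≤ τ := by push_cast at hsn; linarith
    have := abs_le_of_bootstrap_window hsn'.le hK hε
      (by nlinarith) (fun x r hr => (hu x r (hwin hr)).mono hwin)
      (fun r hr => hB r (hwin hr)) (fun r hr => hu' r (hwin hr))
      (ih (n * τ) ⟨ha, hsn'.le.trans hs.2⟩ le_rfl) s ⟨hsn'.le, le_rfl⟩ x
    refine this.trans ?_
    rw [pow_succ]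
    nlinarith

end Bootstrap

structure IsMeanFieldFlow (k : ℝ → ℝ) (μ : Measure ℝ) (T : ℝ → ℝ → ℝ) : Prop where
  apply_zero : ∀ x, T 0 x = x
  measurable : ∀ t, 0 ≤ t → Measurable (T t)
  hasDerivWithinAt : ∀ x t, 0 ≤ t →
    HasDerivWithinAt (T · x) (∫ y, k (T t x - T t y) ∂μ) (Ici 0) t

section MeanField

variable {k : ℝ → ℝ} {K : ℝ≥0} {μ ν : Measure ℝ}

theorem abs_integral_comp_sub_integral_comp_le [IsProbabilityMeasure μ]
    (hk : Periodic k (2 * π)) (hkK : LipschitzWith K k) {F G : ℝ → ℝ}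
    (hF : Measurable F) (hG : Measurable G) {B : ℝ} (hFG : ∀ z, |F z - G z| ≤ B) :
    |∫ z, k (F z) ∂μ - ∫ z, k (G z) ∂μ| ≤ K * B :=
  abs_integral_sub_integral_le_of_abs_sub_le (hk.integrable_comp two_pi_pos hkK hF)
    (hk.integrable_comp two_pi_pos hkK hG) fun z => by
      rw [← Real.dist_eq]
      exact (hkK.dist_le_mul _ _).trans (mul_le_mul_of_nonneg_left (hFG z) K.2)

theorem abs_drift_sub_drift_le [IsProbabilityMeasure μ] [IsProbabilityMeasure ν]
    (hk : Periodic k (2 * π)) (hkK : LipschitzWith K k) {S T : ℝ → ℝ}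
    (hS : Measurable S) (hT : Measurable T) (hTper : ∀ x, T (x + 2 * π) = T x + 2 * π)
    {L : ℝ≥0} (hTL : LipschitzWith L T) {Θ : ℝ} (hST : ∀ z, |S z - T z| ≤ Θ) (x : ℝ) :
    |∫ z, k (S x - S z) ∂ν - ∫ z, k (T x - T z) ∂μ| ≤ K * (2 * Θ) + K * L * W1 ν μ := by
  have h₁ : |∫ z, k (S x - S z) ∂ν - ∫ z, k (T x - T z) ∂ν| ≤ K * (2 * Θ) :=
    abs_integral_comp_sub_integral_comp_le (F := fun z => S x - S z) (G := fun z => T x - T z)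
      hk hkK (measurable_const.sub hS) (measurable_const.sub hT) fun z => by
        rw [show S x - S z - (T x - T z) = (S x - T x) - (S z - T z) by ring]
        linarith [abs_sub (S x - T x) (S z - T z), hST x, hST z]
  have h₂ : |∫ z, k (T x - T z) ∂ν - ∫ z, k (T x - T z) ∂μ| ≤ ↑(K * L) * W1 ν μ := by
    refine abs_integral_sub_integral_le_mul_W1 (f := fun z => k (T x - T z)) (fun z => ?_)
      (LipschitzWith.of_dist_le_mul fun z z' => ?_)
    · dsimp only
      rw [hTper, ← sub_sub, hk.sub_eq]
    · calc dist (k (T x - T z)) (k (T x - T z')) ≤ K * dist (T x - T z) (T x - T z') :=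
            hkK.dist_le_mul _ _
        _ ≤ K * (L * dist z z') := by
            rw [dist_sub_left]
            exact mul_le_mul_of_nonneg_left (hTL.dist_le_mul z z') K.2
        _ = ↑(K * L) * dist z z' := by push_cast; ring
  calc |∫ z, k (S x - S z) ∂ν - ∫ z, k (T x - T z) ∂μ|
      = |(∫ z, k (S x - S z) ∂ν - ∫ z, k (T x - T z) ∂ν)
          + (∫ z, k (T x - T z) ∂ν - ∫ z, k (T x - T z) ∂μ)| := by ring_nf
    _ ≤ K * (2 * Θ) + K * L * W1 ν μ := by
      push_cast at h₂
      exact (abs_add_le _ _).trans (add_le_add h₁ h₂)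

namespace IsMeanFieldFlow

variable [IsProbabilityMeasure μ] {T : ℝ → ℝ → ℝ}

theorem lipschitzWith (hk : Periodic k (2 * π)) (hkK : LipschitzWith K k)
    (hT : IsMeanFieldFlow k μ T) {t : ℝ} (ht : 0 ≤ t) :
    LipschitzWith (rexp (K * t)).toNNReal (T t) := by
  refine LipschitzWith.of_dist_le' fun x y => ?_
  have hder : ∀ s, 0 ≤ s → HasDerivWithinAt (fun s => T s x - T s y)
      (∫ z, k (T s x - T s z) ∂μ - ∫ z, k (T s y - T s z) ∂μ) (Ici 0) s := fun s hs =>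
    (hT.hasDerivWithinAt x s hs).sub (hT.hasDerivWithinAt y s hs)
  have := norm_le_gronwallBound_of_norm_deriv_right_le (δ := dist x y) (ε := 0)
    (fun s hs => (hder s hs.1).continuousWithinAt.mono Icc_subset_Ici_self)
    (fun s hs => (hder s hs.1).mono (Ici_subset_Ici.2 hs.1))
    (by simp [hT.apply_zero, Real.dist_eq])
    (fun s hs => by
      rw [add_zero, Real.norm_eq_abs, Real.norm_eq_abs]
      exact abs_integral_comp_sub_integral_comp_le (F := fun z => T s x - T s z)
        (G := fun z => T s y - T s z) hk hkK
        (measurable_const.sub (hT.measurable s hs.1)) (measurable_const.sub (hT.measurable s hs.1))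
        fun z => by rw [sub_sub_sub_cancel_right])
    t ⟨ht, le_rfl⟩
  rwa [gronwallBound_ε0, sub_zero, mul_comm, ← dist_eq_norm] at this

theorem exists_W1_map_le (hk : Periodic k (2 * π)) (hkK : LipschitzWith K k)
    (hT : IsMeanFieldFlow k μ T) (hTper : ∀ t, 0 ≤ t → ∀ x, T t (x + 2 * π) = T t x + 2 * π)
    {t : ℝ} (ht : 0 ≤ t) :
    ∃ C, ∀ (ν : Measure ℝ) [IsProbabilityMeasure ν] (S : ℝ → ℝ → ℝ), IsMeanFieldFlow k ν S →
      W1 (ν.map (S t)) (μ.map (T t)) ≤ C * W1 ν μ := by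
  set L := rexp (K * t)
  -- windows of length `τ` satisfy `2K τ ≤ 1/2`, and `n` of them cover `[0, t]`
  set τ := (4 * K + 1 : ℝ)⁻¹
  set n := ⌈t * (4 * K + 1)⌉₊
  refine ⟨(2 ^ n - 1) * (2 * τ * (K * L)) + L, fun ν _ S hS => ?_⟩
  have hL : ∀ s ∈ Icc 0 t, LipschitzWith L.toNNReal (T s) := fun s hs =>
    (hT.lipschitzWith hk hkK hs.1).weaken <| Real.toNNReal_le_toNNReal <|
      exp_le_exp.2 (mul_le_mul_of_nonneg_left hs.2 K.2)
  have hu : ∀ x, ∀ s ∈ Icc 0 t, HasDerivWithinAt (fun s => S s x - T s x)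
      (∫ z, k (S s x - S s z) ∂ν - ∫ z, k (T s x - T s z) ∂μ) (Icc 0 t) s := fun x s hs =>
    ((hS.hasDerivWithinAt x s hs.1).sub (hT.hasDerivWithinAt x s hs.1)).mono Icc_subset_Ici_self
  have hu'_bdd : ∀ s ∈ Icc 0 t, ∀ x,
      |∫ z, k (S s x - S s z) ∂ν - ∫ z, k (T s x - T s z) ∂μ| ≤ K * (2 * π) := fun s hs x =>
    abs_integral_sub_integral_le
      (hk.integrable_comp two_pi_pos hkK (measurable_const.sub (hS.measurable s hs.1)))
      (hk.integrable_comp two_pi_pos hkK (measurable_const.sub (hT.measurable s hs.1)))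
      fun _ _ => hk.abs_sub_le_of_lipschitzWith two_pi_pos hkK _ _
  have hu' : ∀ s ∈ Icc 0 t, ∀ Θ, (∀ x, |S s x - T s x| ≤ Θ) → ∀ x,
      |∫ z, k (S s x - S s z) ∂ν - ∫ z, k (T s x - T s z) ∂μ|
        ≤ 2 * K * Θ + K * L * W1 ν μ := fun s hs Θ hΘ x =>
    (abs_drift_sub_drift_le hk hkK (hS.measurable s hs.1) (hT.measurable s hs.1) (hTper s hs.1)
      (hL s hs) hΘ x).trans_eq (by rw [Real.coe_toNNReal _ (exp_pos _).le]; ring)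
  have hnτ : t ≤ n * τ :=
    calc t = t * (4 * K + 1) * τ := by rw [mul_assoc, mul_inv_cancel₀ (by positivity), mul_one]
      _ ≤ n * τ := by gcongr; exact Nat.le_ceil _
  have hclose : ∀ x, |S t x - T t x| ≤ (2 ^ n - 1) * (2 * τ * (K * L * W1 ν μ)) :=
    abs_le_of_bootstrap (by positivity) (by have := W1_nonneg (μ := ν) (ν := μ); positivity)
      (by positivity) (by rw [← div_eq_mul_inv, div_le_iff₀ (by positivity)]; linarith) hu
      (fun x => by simp [hS.apply_zero, hT.apply_zero]) hu'_bdd hu' n t ⟨ht, le_rfl⟩ hnτ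
  calc W1 (ν.map (S t)) (μ.map (T t))
      ≤ (2 ^ n - 1) * (2 * τ * (K * L * W1 ν μ)) + L * W1 ν μ := by
        refine (W1_map_le (hS.measurable t ht) (hT.measurable t ht) (hTper t ht)
          (hL t ⟨ht, le_rfl⟩) hclose).trans_eq ?_
        rw [Real.coe_toNNReal _ (exp_pos _).le]
    _ = ((2 ^ n - 1) * (2 * τ * (K * L)) + L) * W1 ν μ := by ring

end IsMeanFieldFlow

end MeanField

theorem hBeta_periodic (β : ℝ) : Periodic (hBeta β) (2 * π) := fun θ => by
  simp only [hBeta, cos_add_two_pi]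

theorem hBeta'_periodic (β : ℝ) : Periodic (hBeta' β) (2 * π) :=
  (hBeta_periodic β).deriv

theorem exists_lipschitzWith_hBeta' (β : ℝ) : ∃ K, LipschitzWith K (hBeta' β) := by
  have hsmooth : ContDiff ℝ (⊤ : ℕ∞) (hBeta β) := by unfold hBeta; fun_prop
  exact (hBeta'_periodic β).exists_lipschitzWith two_pi_pos.ne'
    ((contDiff_infty_iff_deriv.1 hsmooth).2.of_le (by exact_mod_cast le_top))

theorem mean_field_limit_general (β : ℝ)
    (μ₀ : Measure ℝ) [IsProbabilityMeasure μ₀]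
    (μ₀seq : ℕ → Measure ℝ) (hprob : ∀ N, IsProbabilityMeasure (μ₀seq N))
    (hconv : Tendsto (fun N => W1 (μ₀seq N) μ₀) atTop (nhds 0))
    (T : ℝ → ℝ → ℝ) (TN : ℕ → ℝ → ℝ → ℝ)
    (hT0 : ∀ x, T 0 x = x) (hTN0 : ∀ N x, TN N 0 x = x)
    (hTmeas : ∀ t, 0 ≤ t → Measurable (T t))
    (hTNmeas : ∀ N t, 0 ≤ t → Measurable (TN N t))
    (hTper : ∀ t, 0 ≤ t → ∀ x, T t (x + 2 * π) = T t x + 2 * π)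
    (hTode : ∀ x : ℝ, ∀ t, 0 ≤ t →
      HasDerivWithinAt (fun s => T s x)
        (∫ y, hBeta' β (T t x - T t y) ∂μ₀) (Set.Ici 0) t)
    (hTNode : ∀ N, ∀ x : ℝ, ∀ t, 0 ≤ t →
      HasDerivWithinAt (fun s => TN N s x)
        (∫ y, hBeta' β (TN N t x - TN N t y) ∂(μ₀seq N)) (Set.Ici 0) t)
    (t : ℝ) (ht : 0 ≤ t) :
    Tendsto (fun N => W1 ((μ₀seq N).map (TN N t)) (μ₀.map (T t))) atTop (nhds 0) := by
  obtain ⟨K, hK⟩ := exists_lipschitzWith_hBeta' β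
  obtain ⟨C, hC⟩ := IsMeanFieldFlow.exists_W1_map_le (hBeta'_periodic β) hK
    ⟨hT0, hTmeas, hTode⟩ hTper ht
  refine squeeze_zero (fun N => W1_nonneg) (fun N => ?_) (by simpa using hconv.const_mul C)
  have := hprob N
  exact hC (μ₀seq N) (TN N) ⟨hTN0 N, hTNmeas N, hTNode N⟩

/-- Mean-field limit: convergence of the empirical dynamics to the mean-field dynamics
at every fixed time. -/
theorem mean_field_limit (β : ℝ) (hβpos : 0 < β)
    (μ₀ : Measure ℝ) [IsProbabilityMeasure μ₀]
    (μ₀seq : ℕ → Measure ℝ) (hprob : ∀ N, IsProbabilityMeasure (μ₀seq N))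
    (hconv : Tendsto (fun N => W1 (μ₀seq N) μ₀) atTop (nhds 0))
    (T : ℝ → ℝ → ℝ) (TN : ℕ → ℝ → ℝ → ℝ)
    (hT0 : ∀ x, T 0 x = x) (hTN0 : ∀ N x, TN N 0 x = x)
    (hTmeas : ∀ t, 0 ≤ t → Measurable (T t))
    (hTNmeas : ∀ N t, 0 ≤ t → Measurable (TN N t))
    (hTper : ∀ t, 0 ≤ t → ∀ x, T t (x + 2 * π) = T t x + 2 * π)
    (hTNper : ∀ N t, 0 ≤ t → ∀ x, TN N t (x + 2 * π) = TN N t x + 2 * π)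
    (hTode : ∀ x : ℝ, ∀ t, 0 ≤ t →
      HasDerivWithinAt (fun s => T s x)
        (∫ y, hBeta' β (T t x - T t y) ∂μ₀) (Set.Ici 0) t)
    (hTNode : ∀ N, ∀ x : ℝ, ∀ t, 0 ≤ t →
      HasDerivWithinAt (fun s => TN N s x)
        (∫ y, hBeta' β (TN N t x - TN N t y) ∂(μ₀seq N)) (Set.Ici 0) t)
    (t : ℝ) (ht : 0 ≤ t) :
    Tendsto (fun N => W1 ((μ₀seq N).map (TN N t)) (μ₀.map (T t))) atTop (nhds 0) :=
  mean_field_limit_general β μ₀ μ₀seq hprob hconv T TN hT0 hTN0 hTmeas hTNmeas hTper hTode hTNode t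
    ht
end

section
/- Fix β > 0 and an integer N ≥ 1. Let θ, φ : [0,∞) → ℝ^N be differentiable and satisfy the N-token transformer system θᵢ′(t) = −(1/N)·Σ_{j=1}^N e^{β·cos(θᵢ(t) − θⱼ(t))}·sin(θᵢ(t) − θⱼ(t)) for every i (and the same equations for φ). Then for every t ≥ 0, max_{1≤i≤N} |θᵢ(t) − φᵢ(t)| ≤ e^{2·C_β·t} · max_{1≤i≤N} |θᵢ(0) − φᵢ(0)|. (Dobrushin's estimate specialized to empirical measures of the N-particle angular dynamics.) -/
/-!
The right-hand side of the system is the mean-field vector field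
`x ↦ (N⁻¹ ∑ⱼ h_β′(xᵢ - xⱼ))ᵢ`. Since `|h_β″| ≤ C_β`, the kernel `h_β′` is `C_β`-Lipschitz, and
`|(xᵢ - xⱼ) - (yᵢ - yⱼ)| ≤ 2 ‖x - y‖_∞` makes the field `2 C_β`-Lipschitz for the sup norm.
Grönwall's inequality for two trajectories of a Lipschitz vector field then gives the bound,
the maximum over particles being exactly the sup distance on `Fin N → ℝ`.
-/

open MeasureTheory Real Filter

/-- `C_β = sup_θ |h_β″(θ)|`. -/
noncomputable def CBeta (β : ℝ) : ℝ := ⨆ θ : ℝ, |deriv (hBeta' β) θ|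

open scoped NNReal

section Kernel

variable {β : ℝ}

lemma hBeta'_eq (hβ : β ≠ 0) : hBeta' β = fun θ => -(Real.exp (β * Real.cos θ) * Real.sin θ) := by
  funext θ
  have h : HasDerivAt (hBeta β) _ θ := ((Real.hasDerivAt_cos θ).const_mul β).exp.const_mul β⁻¹
  rw [hBeta', h.deriv]
  field_simp

lemma hasDerivAt_hBeta' (hβ : β ≠ 0) (θ : ℝ) :
    HasDerivAt (hBeta' β)
      (Real.exp (β * Real.cos θ) * (β * Real.sin θ ^ 2 - Real.cos θ)) θ := by
  rw [hBeta'_eq hβ]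
  refine (((Real.hasDerivAt_cos θ).const_mul β).exp.mul (Real.hasDerivAt_sin θ)).neg.congr_deriv ?_
  ring

lemma abs_deriv_hBeta'_le (hβ : β ≠ 0) (θ : ℝ) :
    |deriv (hBeta' β) θ| ≤ Real.exp |β| * (|β| + 1) := by
  rw [(hasDerivAt_hBeta' hβ θ).deriv, abs_mul, abs_of_pos (Real.exp_pos _)]
  have hexp : Real.exp (β * Real.cos θ) ≤ Real.exp |β| := by
    gcongr
    calc β * Real.cos θ ≤ |β * Real.cos θ| := le_abs_self _
      _ ≤ |β| := by
          rw [abs_mul]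
          exact mul_le_of_le_one_right (abs_nonneg β) (Real.abs_cos_le_one θ)
  have hpoly : |β * Real.sin θ ^ 2 - Real.cos θ| ≤ |β| + 1 :=
    calc |β * Real.sin θ ^ 2 - Real.cos θ| ≤ |β * Real.sin θ ^ 2| + |Real.cos θ| := abs_sub _ _
      _ = |β| * Real.sin θ ^ 2 + |Real.cos θ| := by rw [abs_mul, abs_sq]
      _ ≤ |β| + 1 := by
          gcongr
          · exact mul_le_of_le_one_right (abs_nonneg β) (Real.sin_sq_le_one θ)
          · exact Real.abs_cos_le_one θ
  gcongr

lemma abs_deriv_hBeta'_le_CBeta (hβ : β ≠ 0) (θ : ℝ) : |deriv (hBeta' β) θ| ≤ CBeta β :=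
  le_ciSup ⟨_, Set.forall_mem_range.2 (abs_deriv_hBeta'_le hβ)⟩ θ

lemma CBeta_nonneg (hβ : β ≠ 0) : 0 ≤ CBeta β :=
  (abs_nonneg _).trans (abs_deriv_hBeta'_le_CBeta hβ 0)

lemma lipschitzWith_hBeta' (hβ : β ≠ 0) : LipschitzWith ⟨CBeta β, CBeta_nonneg hβ⟩ (hBeta' β) :=
  lipschitzWith_of_nnnorm_deriv_le (fun θ => (hasDerivAt_hBeta' hβ θ).differentiableAt)
    (abs_deriv_hBeta'_le_CBeta hβ)

end Kernel

section MeanField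

variable {ι : Type*} [Fintype ι]

noncomputable def meanField (g : ℝ → ℝ) (x : ι → ℝ) : ι → ℝ :=
  fun i => (Fintype.card ι : ℝ)⁻¹ * ∑ j, g (x i - x j)

lemma LipschitzWith.meanField {g : ℝ → ℝ} {L : ℝ≥0} (hg : LipschitzWith L g) :
    LipschitzWith (2 * L) (meanField (ι := ι) g) := by
  refine LipschitzWith.of_dist_le_mul fun x y => (dist_pi_le_iff (by positivity)).2 fun i => ?_
  have hcard : (0 : ℝ) < Fintype.card ι := Nat.cast_pos.2 (Fintype.card_pos_iff.2 ⟨i⟩)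
  have hterm : ∀ j, dist (g (x i - x j)) (g (y i - y j)) ≤ 2 * L * dist x y := fun j =>
    calc dist (g (x i - x j)) (g (y i - y j)) ≤ L * dist (x i - x j) (y i - y j) :=
          hg.dist_le_mul _ _
      _ ≤ L * (dist x y + dist x y) := by
          gcongr
          exact (dist_sub_sub_le _ _ _ _).trans (add_le_add (dist_le_pi_dist x y i)
            (dist_le_pi_dist x y j))
      _ = 2 * L * dist x y := by ring
  calc dist (_root_.meanField g x i) (_root_.meanField g y i)
      = (Fintype.card ι : ℝ)⁻¹ * dist (∑ j, g (x i - x j)) (∑ j, g (y i - y j)) := by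
        simp only [_root_.meanField, Real.dist_eq, ← mul_sub, abs_mul, abs_inv, Nat.abs_cast]
    _ ≤ (Fintype.card ι : ℝ)⁻¹ * ∑ _j : ι, 2 * L * dist x y := by
        gcongr
        exact dist_sum_sum_le_of_le _ fun j _ => hterm j
    _ = ↑(2 * L) * dist x y := by
        rw [Finset.sum_const, Finset.card_univ, nsmul_eq_mul]
        push_cast
        field_simp

lemma ciSup_abs_sub_eq_dist (x y : ι → ℝ) : ⨆ i, |x i - y i| = dist x y := by
  refine le_antisymm (Real.iSup_le (fun i => dist_le_pi_dist x y i) dist_nonneg) ?_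
  refine (dist_pi_le_iff (Real.iSup_nonneg fun i => abs_nonneg _)).2 fun i => ?_
  exact le_ciSup (f := fun i => |x i - y i|) (Set.finite_range _).bddAbove i

end MeanField

lemma meanField_hBeta'_apply {β : ℝ} (hβ : β ≠ 0) {N : ℕ} (x : Fin N → ℝ) (i : Fin N) :
    meanField (hBeta' β) x i =
      -(1 / (N : ℝ)) * ∑ j : Fin N,
        Real.exp (β * Real.cos (x i - x j)) * Real.sin (x i - x j) := by
  simp only [meanField, hBeta'_eq hβ, Fintype.card_fin, Finset.sum_neg_distrib]
  ring

lemma dist_le_exp_mul_dist_of_hasDerivWithinAt_Ici {E : Type*} [NormedAddCommGroup E]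
    [NormedSpace ℝ E] {v : E → E} {K : ℝ≥0} (hv : LipschitzWith K v) {f g : ℝ → E}
    (hf : ∀ t, 0 ≤ t → HasDerivWithinAt f (v (f t)) (Set.Ici 0) t)
    (hg : ∀ t, 0 ≤ t → HasDerivWithinAt g (v (g t)) (Set.Ici 0) t) {t : ℝ} (ht : 0 ≤ t) :
    dist (f t) (g t) ≤ Real.exp (K * t) * dist (f 0) (g 0) := by
  have := dist_le_of_trajectories_ODE (v := fun _ => v) (fun _ => hv)
    (fun s hs => (hf s hs.1).continuousWithinAt.mono Set.Icc_subset_Ici_self)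
    (fun s hs => (hf s hs.1).mono (Set.Ici_subset_Ici.2 hs.1))
    (fun s hs => (hg s hs.1).continuousWithinAt.mono Set.Icc_subset_Ici_self)
    (fun s hs => (hg s hs.1).mono (Set.Ici_subset_Ici.2 hs.1)) le_rfl t ⟨ht, le_rfl⟩
  rwa [sub_zero, mul_comm] at this

theorem dobrushin_particles_general (β : ℝ) (hβpos : 0 < β) (N : ℕ)
    (θ φ : ℝ → Fin N → ℝ)
    (hθ : ∀ i : Fin N, ∀ t, 0 ≤ t →
      HasDerivWithinAt (fun s => θ s i)
        (-(1 / (N : ℝ)) * ∑ j : Fin N,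
          Real.exp (β * Real.cos (θ t i - θ t j)) * Real.sin (θ t i - θ t j))
        (Set.Ici 0) t)
    (hφ : ∀ i : Fin N, ∀ t, 0 ≤ t →
      HasDerivWithinAt (fun s => φ s i)
        (-(1 / (N : ℝ)) * ∑ j : Fin N,
          Real.exp (β * Real.cos (φ t i - φ t j)) * Real.sin (φ t i - φ t j))
        (Set.Ici 0) t)
    (t : ℝ) (ht : 0 ≤ t) :
    (⨆ i : Fin N, |θ t i - φ t i|) ≤ Real.exp (2 * CBeta β * t) * ⨆ i : Fin N, |θ 0 i - φ 0 i| := by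
  have hβ : β ≠ 0 := hβpos.ne'
  have hθ' : ∀ t, 0 ≤ t → HasDerivWithinAt θ (meanField (hBeta' β) (θ t)) (Set.Ici 0) t :=
    fun t ht => hasDerivWithinAt_pi.2 fun i => by
      simpa only [meanField_hBeta'_apply hβ] using hθ i t ht
  have hφ' : ∀ t, 0 ≤ t → HasDerivWithinAt φ (meanField (hBeta' β) (φ t)) (Set.Ici 0) t :=
    fun t ht => hasDerivWithinAt_pi.2 fun i => by
      simpa only [meanField_hBeta'_apply hβ] using hφ i t ht
  rw [ciSup_abs_sub_eq_dist, ciSup_abs_sub_eq_dist]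
  exact dist_le_exp_mul_dist_of_hasDerivWithinAt_Ici (lipschitzWith_hBeta' hβ).meanField hθ' hφ' ht

/-- Dobrushin's estimate specialized to empirical measures of the N-particle angular dynamics. -/
theorem dobrushin_particles (β : ℝ) (hβpos : 0 < β) (N : ℕ) (hN : 1 ≤ N)
    (θ φ : ℝ → Fin N → ℝ)
    (hθ : ∀ i : Fin N, ∀ t, 0 ≤ t →
      HasDerivWithinAt (fun s => θ s i)
        (-(1 / (N : ℝ)) * ∑ j : Fin N,
          Real.exp (β * Real.cos (θ t i - θ t j)) * Real.sin (θ t i - θ t j))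
        (Set.Ici 0) t)
    (hφ : ∀ i : Fin N, ∀ t, 0 ≤ t →
      HasDerivWithinAt (fun s => φ s i)
        (-(1 / (N : ℝ)) * ∑ j : Fin N,
          Real.exp (β * Real.cos (φ t i - φ t j)) * Real.sin (φ t i - φ t j))
        (Set.Ici 0) t)
    (t : ℝ) (ht : 0 ≤ t) :
    (⨆ i : Fin N, |θ t i - φ t i|) ≤ Real.exp (2 * CBeta β * t) * ⨆ i : Fin N, |θ 0 i - φ 0 i| :=
  dobrushin_particles_general β hβpos N θ φ hθ hφ t ht
end
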